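/- arXiv:1310.2399 — 2 statements merged into one kernel-verified Lean document; each statement's English description precedes it below -/
import Mathlib

section
/- Suppose f : ℝ → ℝ is continuous, f(t)/t → 0 as t → 0, and F̃(t) := (1/2)·t·f(t) − F(t) ≥ 0 for all t, where F(t) = ∫₀ᵗ f(s) ds. Then F(t) ≥ 0 for all t ∈ ℝ. -/
open intervalIntegral Filter

theorem stmt1 (f : ℝ → ℝ) (hf : Continuous f)
    (hsmall : Tendsto (fun t => f t / t) (nhdsWithin 0 {0}ᶜ) (nhds 0))
    (F : ℝ → ℝ) (hF : ∀ t, F t = ∫ s in (0:ℝ)..t, f s)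
    (hFt : ∀ t : ℝ, 0 ≤ (1/2) * t * f t - F t) :
    ∀ t : ℝ, 0 ≤ F t := by
  have hFderiv : ∀ t : ℝ, HasDerivAt F (f t) t := by
    intro t
    have h1 : HasDerivAt (fun u => ∫ s in (0:ℝ)..u, f s) (f t) t :=
      intervalIntegral.integral_hasDerivAt_right (hf.intervalIntegrable 0 t)
        (hf.aestronglyMeasurable.stronglyMeasurableAtFilter) hf.continuousAt
    exact h1.congr_of_eventuallyEq (Filter.Eventually.of_forall fun u => hF u)
  have hF0 : F 0 = 0 := by rw [hF 0, intervalIntegral.integral_same]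
  set G : ℝ → ℝ := fun u => F u / u ^ 2 with hG
  have hGderiv : ∀ t : ℝ, t ≠ 0 →
      HasDerivAt G ((f t * t ^ 2 - F t * (2 * t ^ 1)) / (t ^ 2) ^ 2) t := by
    intro t ht
    exact (hFderiv t).div (hasDerivAt_pow 2 t) (pow_ne_zero 2 ht)
  have hne : ∀ᶠ x in nhdsWithin (0:ℝ) {0}ᶜ, x ≠ 0 :=
    eventually_mem_nhdsWithin
  -- L'Hopital: G → 0 at 0
  have hGlim : Tendsto G (nhdsWithin 0 {0}ᶜ) (nhds 0) := by
    have hFcont : Continuous F := Differentiable.continuous fun t => (hFderiv t).differentiableAt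
    have hFlim : Tendsto F (nhdsWithin 0 {0}ᶜ) (nhds 0) := by
      have := hFcont.tendsto 0
      rw [hF0] at this
      exact this.mono_left nhdsWithin_le_nhds
    have hglim : Tendsto (fun u : ℝ => u ^ 2) (nhdsWithin 0 {0}ᶜ) (nhds 0) := by
      have : Tendsto (fun u : ℝ => u ^ 2) (nhds 0) (nhds 0) := by
        simpa using (continuous_pow 2).tendsto (0:ℝ)
      exact this.mono_left nhdsWithin_le_nhds
    have hdiv : Tendsto (fun x : ℝ => f x / (2 * x ^ 1)) (nhdsWithin 0 {0}ᶜ) (nhds 0) := by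
      have : Tendsto (fun x : ℝ => (f x / x) / 2) (nhdsWithin 0 {0}ᶜ) (nhds (0 / 2)) :=
        hsmall.div_const 2
      rw [zero_div] at this
      apply this.congr'
      filter_upwards [hne] with x hx
      rw [pow_one, div_div, mul_comm]
    exact HasDerivAt.lhopital_zero_nhdsNE
      (Filter.Eventually.of_forall fun x => hFderiv x)
      (Filter.Eventually.of_forall fun x => hasDerivAt_pow 2 x)
      (by filter_upwards [hne] with x hx; simpa using hx)
      hFlim hglim hdiv
  -- monotonicity on Ioi 0
  have hmono : MonotoneOn G (Set.Ioi (0:ℝ)) := by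
    apply monotoneOn_of_deriv_nonneg (convex_Ioi 0)
    · intro x hx
      exact ((hGderiv x (ne_of_gt hx)).continuousAt).continuousWithinAt
    · intro x hx
      rw [interior_Ioi] at hx
      exact ((hGderiv x (ne_of_gt hx)).differentiableAt).differentiableWithinAt
    · intro x hx
      rw [interior_Ioi] at hx
      rw [(hGderiv x (ne_of_gt hx)).deriv]
      apply div_nonneg _ (by positivity)
      have := hFt x
      nlinarith [hx.out]
  have hanti : AntitoneOn G (Set.Iio (0:ℝ)) := by
    apply antitoneOn_of_deriv_nonpos (convex_Iio 0)
    · intro x hx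
      exact ((hGderiv x (ne_of_lt hx)).continuousAt).continuousWithinAt
    · intro x hx
      rw [interior_Iio] at hx
      exact ((hGderiv x (ne_of_lt hx)).differentiableAt).differentiableWithinAt
    · intro x hx
      rw [interior_Iio] at hx
      rw [(hGderiv x (ne_of_lt hx)).deriv]
      apply div_nonpos_of_nonpos_of_nonneg _ (by positivity)
      have := hFt x
      nlinarith [hx.out]
  intro t
  rcases lt_trichotomy t 0 with ht | ht | ht
  · have hGt : 0 ≤ G t := by
      have hlim : Tendsto G (nhdsWithin 0 (Set.Iio 0)) (nhds 0) :=
        hGlim.mono_left (nhdsWithin_mono _ (fun x hx => ne_of_lt hx))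
      refine le_of_tendsto hlim ?_
      filter_upwards [Ioo_mem_nhdsLT_of_mem (by constructor <;> linarith :
          (0:ℝ) ∈ Set.Ioc t 0)] with s hs
      exact hanti ht hs.2 hs.1.le
    have : 0 ≤ F t / t ^ 2 := hGt
    have ht' : t ≠ 0 := ne_of_lt ht
    calc (0:ℝ) = 0 * t ^ 2 := by ring
    _ ≤ (F t / t ^ 2) * t ^ 2 := by
        apply mul_le_mul_of_nonneg_right this (by positivity)
    _ = F t := by field_simp
  · rw [ht, hF0]
  · have hGt : 0 ≤ G t := by
      have hlim : Tendsto G (nhdsWithin 0 (Set.Ioi 0)) (nhds 0) :=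
        hGlim.mono_left (nhdsWithin_mono _ (fun x hx => ne_of_gt hx))
      refine le_of_tendsto hlim ?_
      filter_upwards [Ioo_mem_nhdsGT_of_mem (by constructor <;> linarith :
          (0:ℝ) ∈ Set.Ico 0 t)] with s hs
      exact hmono hs.1 ht hs.2.le
    have : 0 ≤ F t / t ^ 2 := hGt
    have ht' : t ≠ 0 := ne_of_gt ht
    calc (0:ℝ) = 0 * t ^ 2 := by ring
    _ ≤ (F t / t ^ 2) * t ^ 2 := by
        apply mul_le_mul_of_nonneg_right this (by positivity)
    _ = F t := by field_simp
end

section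
/- Suppose f : ℝ → ℝ satisfies |f(t)| ≤ ν·|t| for |t| < κ with 0 < ν < μ₀, and |f(t)| ≤ C·|t| for all t. Let (u_n), (w_n⁺), (w_n⁻), (w_n) be measurable functions on ℝᴺ with w_n = w_n⁺ + w_n⁻, ‖w_n‖_{L²} ≤ 1/√μ₀, |u_n| ≤ b, and ∫_{κ ≤ |u_n| ≤ b} w_n² dx → 0. Then limsup_n ∫_{ℝᴺ} |f(u_n)/u_n|·|w_n⁺ − w_n⁻|·|w_n| dx ≤ ν/μ₀ < 1, where the integrand is taken 0 where u_n = 0 and ‖w_n⁺ − w_n⁻‖_{L²} = ‖w_n‖_{L²}. -/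
/-!
Split the integrand according to the size of `u n`. Where `|u n| < κ` the weight
`|f(u n) / u n|` is at most `ν`, and Cauchy–Schwarz with `‖w⁺ - w⁻‖₂ = ‖w‖₂ ≤ μ₀^{-1/2}`
bounds that part by `ν / μ₀`. On `{κ ≤ |u n| ≤ b}` the weight is only bounded by `C`, but
there Cauchy–Schwarz pays the factor `‖w n‖_{L²(κ ≤ |u n| ≤ b)}`, which tends to `0`.
-/

open MeasureTheory Filter Topology

section L2Bounds

variable {α : Type*} [MeasurableSpace α] {μ : Measure α} {f g : α → ℝ}

lemma memLp_two_abs_of_integrable_sq (hf : AEStronglyMeasurable f μ)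
    (hf2 : Integrable (fun x => f x ^ 2) μ) : MemLp (fun x => |f x|) 2 μ :=
  ((memLp_two_iff_integrable_sq hf).2 hf2).norm

lemma integrable_abs_mul_abs_of_integrable_sq (hf : AEStronglyMeasurable f μ)
    (hg : AEStronglyMeasurable g μ) (hf2 : Integrable (fun x => f x ^ 2) μ)
    (hg2 : Integrable (fun x => g x ^ 2) μ) : Integrable (fun x => |f x| * |g x|) μ :=
  (memLp_two_abs_of_integrable_sq hf hf2).integrable_mul (memLp_two_abs_of_integrable_sq hg hg2)

lemma integral_abs_mul_abs_le_sqrt_mul_sqrt (hf : AEStronglyMeasurable f μ)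
    (hg : AEStronglyMeasurable g μ) (hf2 : Integrable (fun x => f x ^ 2) μ)
    (hg2 : Integrable (fun x => g x ^ 2) μ) :
    ∫ x, |f x| * |g x| ∂μ ≤ √(∫ x, f x ^ 2 ∂μ) * √(∫ x, g x ^ 2 ∂μ) := by
  have h := integral_mul_le_Lp_mul_Lq_of_nonneg Real.HolderConjugate.two_two
    (.of_forall fun x => abs_nonneg (f x)) (.of_forall fun x => abs_nonneg (g x))
    (by simpa using memLp_two_abs_of_integrable_sq hf hf2)
    (by simpa using memLp_two_abs_of_integrable_sq hg hg2)
  simpa only [Real.rpow_two, sq_abs, ← Real.sqrt_eq_rpow] using h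

lemma integral_mul_abs_mul_abs_le {q d w : α → ℝ} {S : Set α} {ν C : ℝ} (hν : 0 ≤ ν)
    (hC : 0 ≤ C) (hS : MeasurableSet S) (hd : AEStronglyMeasurable d μ)
    (hw : AEStronglyMeasurable w μ) (hd2 : Integrable (fun x => d x ^ 2) μ)
    (hw2 : Integrable (fun x => w x ^ 2) μ) (hq0 : ∀ x, 0 ≤ q x) (hqS : ∀ x ∈ S, q x ≤ C)
    (hqSc : ∀ x ∉ S, q x ≤ ν) :
    ∫ x, q x * |d x| * |w x| ∂μ ≤
      √(∫ x, d x ^ 2 ∂μ) * (ν * √(∫ x, w x ^ 2 ∂μ) + C * √(∫ x in S, w x ^ 2 ∂μ)) := by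
  set wS := S.indicator w
  have hwS2 : (fun x => wS x ^ 2) = S.indicator (fun x => w x ^ 2) :=
    Set.indicator_comp_of_zero (g := fun y : ℝ => y ^ 2) (by simp) |>.symm
  have hwS2_int : Integrable (fun x => wS x ^ 2) μ := hwS2 ▸ hw2.indicator hS
  have hdw := integrable_abs_mul_abs_of_integrable_sq hd hw hd2 hw2
  have hdwS := integrable_abs_mul_abs_of_integrable_sq hd (hw.indicator hS) hd2 hwS2_int
  have hpointwise : ∀ x, q x * |d x| * |w x| ≤ ν * (|d x| * |w x|) + C * (|d x| * |wS x|) := by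
    intro x
    rw [mul_assoc]
    by_cases hx : x ∈ S
    · simp only [wS, Set.indicator_of_mem hx]
      have : q x * (|d x| * |w x|) ≤ C * (|d x| * |w x|) := by gcongr; exact hqS x hx
      have : 0 ≤ ν * (|d x| * |w x|) := by positivity
      linarith
    · simp only [wS, Set.indicator_of_notMem hx, abs_zero, mul_zero, add_zero]
      gcongr
      exact hqSc x hx
  calc ∫ x, q x * |d x| * |w x| ∂μ
      ≤ ∫ x, ν * (|d x| * |w x|) + C * (|d x| * |wS x|) ∂μ :=
        integral_mono_of_nonneg (.of_forall fun x => by have := hq0 x; positivity)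
          ((hdw.const_mul ν).add (hdwS.const_mul C)) (.of_forall hpointwise)
    _ = ν * ∫ x, |d x| * |w x| ∂μ + C * ∫ x, |d x| * |wS x| ∂μ := by
        rw [integral_add (hdw.const_mul ν) (hdwS.const_mul C), integral_const_mul,
          integral_const_mul]
    _ ≤ ν * (√(∫ x, d x ^ 2 ∂μ) * √(∫ x, w x ^ 2 ∂μ))
          + C * (√(∫ x, d x ^ 2 ∂μ) * √(∫ x, wS x ^ 2 ∂μ)) := by
        gcongr
        · exact integral_abs_mul_abs_le_sqrt_mul_sqrt hd hw hd2 hw2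
        · exact integral_abs_mul_abs_le_sqrt_mul_sqrt hd (hw.indicator hS) hd2 hwS2_int
    _ = _ := by rw [hwS2, integral_indicator hS]; ring

end L2Bounds

lemma limsup_le_of_le_of_tendsto {β : Type*} {l : Filter β} [l.NeBot] {u v : β → ℝ} {a : ℝ}
    (hu : ∀ n, 0 ≤ u n) (huv : ∀ n, u n ≤ v n) (hv : Tendsto v l (𝓝 a)) :
    limsup u l ≤ a :=
  hv.limsup_eq ▸ limsup_le_limsup (.of_forall huv) (isCoboundedUnder_le_of_le l hu)
    hv.isBoundedUnder_le

theorem stmt12_general (N : ℕ) (ν μ₀ κ C b : ℝ)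
    (hν : 0 < ν) (hνμ : ν < μ₀) (hC : 0 < C)
    (f : ℝ → ℝ)
    (hfsmall : ∀ t : ℝ, |t| < κ → |f t| ≤ ν * |t|)
    (hflin : ∀ t : ℝ, |f t| ≤ C * |t|)
    (u w wp wm : ℕ → (Fin N → ℝ) → ℝ)
    (humeas : ∀ n, Measurable (u n)) (hwmeas : ∀ n, Measurable (w n))
    (hwpmeas : ∀ n, Measurable (wp n)) (hwmmeas : ∀ n, Measurable (wm n))
    (hw2int : ∀ n, Integrable (fun x => (w n x) ^ 2))
    (hdiff2int : ∀ n, Integrable (fun x => (wp n x - wm n x) ^ 2))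
    (hwL2 : ∀ n, ∫ x, (w n x) ^ 2 ≤ 1 / μ₀)
    (hdiffL2 : ∀ n, ∫ x, (wp n x - wm n x) ^ 2 = ∫ x, (w n x) ^ 2)
    (hub : ∀ n, ∀ x, |u n x| ≤ b)
    (hshrink : Tendsto
      (fun n => ∫ x in {x | κ ≤ |u n x| ∧ |u n x| ≤ b}, (w n x) ^ 2) atTop (𝓝 0)) :
    Filter.limsup (fun n => ∫ x,
        (if u n x = 0 then 0 else |f (u n x) / u n x| * |wp n x - wm n x| * |w n x|))
      atTop ≤ ν / μ₀ ∧ ν / μ₀ < 1 := by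
  have hμ₀ : 0 < μ₀ := hν.trans hνμ
  set ε := fun n => ∫ x in {x | κ ≤ |u n x| ∧ |u n x| ≤ b}, (w n x) ^ 2
  have hratio {c t : ℝ} (hc : 0 ≤ c) (h : |f t| ≤ c * |t|) : |f t / t| ≤ c :=
    abs_div (f t) t ▸ div_le_of_le_mul₀ (abs_nonneg t) hc h
  -- `x / 0 = 0` makes the case split in the integrand redundant
  have hintegrand (n : ℕ) (x : Fin N → ℝ) :
      (if u n x = 0 then 0 else |f (u n x) / u n x| * |wp n x - wm n x| * |w n x|)
        = |f (u n x) / u n x| * |wp n x - wm n x| * |w n x| := by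
    split_ifs with h <;> simp [h]
  have hbound (n : ℕ) : ∫ x, |f (u n x) / u n x| * |wp n x - wm n x| * |w n x|
      ≤ ν / μ₀ + C * √(1 / μ₀) * √(ε n) := by
    have hS : MeasurableSet {x | κ ≤ |u n x| ∧ |u n x| ≤ b} :=
      (measurableSet_le measurable_const (humeas n).abs).inter
        (measurableSet_le (humeas n).abs measurable_const)
    have key := integral_mul_abs_mul_abs_le (d := fun x => wp n x - wm n x) hν.le hC.le hS
      ((hwpmeas n).sub (hwmmeas n)).aestronglyMeasurable (hwmeas n).aestronglyMeasurable
      (hdiff2int n) (hw2int n) (fun x => abs_nonneg _) (fun x _ => hratio hC.le (hflin _))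
      (fun x hx => hratio hν.le (hfsmall _ (by by_contra! h; exact hx ⟨h, hub n x⟩)))
    rw [hdiffL2] at key
    refine key.trans ?_
    calc √(∫ x, w n x ^ 2) * (ν * √(∫ x, w n x ^ 2) + C * √(ε n))
        = ν * (∫ x, w n x ^ 2) + C * √(∫ x, w n x ^ 2) * √(ε n) := by
          linear_combination ν * Real.mul_self_sqrt (integral_nonneg fun x => sq_nonneg (w n x))
      _ ≤ ν * (1 / μ₀) + C * √(1 / μ₀) * √(ε n) := by gcongr <;> exact hwL2 n
      _ = ν / μ₀ + C * √(1 / μ₀) * √(ε n) := by ring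
  refine ⟨limsup_le_of_le_of_tendsto (fun n => integral_nonneg fun x => ?_)
    (fun n => (integral_congr_ae (.of_forall (hintegrand n))).trans_le (hbound n)) ?_,
    (div_lt_one hμ₀).2 hνμ⟩
  · dsimp only
    split_ifs <;> positivity
  · simpa using tendsto_const_nhds.add (hshrink.sqrt.const_mul (C * √(1 / μ₀)))

theorem stmt12 (N : ℕ) (ν μ₀ κ C b : ℝ)
    (hν : 0 < ν) (hνμ : ν < μ₀) (hκ : 0 < κ) (hC : 0 < C) (hb : κ ≤ b)
    (f : ℝ → ℝ)
    (hfsmall : ∀ t : ℝ, |t| < κ → |f t| ≤ ν * |t|)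
    (hflin : ∀ t : ℝ, |f t| ≤ C * |t|)
    (u w wp wm : ℕ → (Fin N → ℝ) → ℝ)
    (humeas : ∀ n, Measurable (u n)) (hwmeas : ∀ n, Measurable (w n))
    (hwpmeas : ∀ n, Measurable (wp n)) (hwmmeas : ∀ n, Measurable (wm n))
    (hw2int : ∀ n, Integrable (fun x => (w n x) ^ 2))
    (hdiff2int : ∀ n, Integrable (fun x => (wp n x - wm n x) ^ 2))
    (hsum : ∀ n, ∀ x, w n x = wp n x + wm n x)
    (hwL2 : ∀ n, ∫ x, (w n x) ^ 2 ≤ 1 / μ₀)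
    (hdiffL2 : ∀ n, ∫ x, (wp n x - wm n x) ^ 2 = ∫ x, (w n x) ^ 2)
    (hub : ∀ n, ∀ x, |u n x| ≤ b)
    (hshrink : Tendsto
      (fun n => ∫ x in {x | κ ≤ |u n x| ∧ |u n x| ≤ b}, (w n x) ^ 2) atTop (𝓝 0)) :
    Filter.limsup (fun n => ∫ x,
        (if u n x = 0 then 0 else |f (u n x) / u n x| * |wp n x - wm n x| * |w n x|))
      atTop ≤ ν / μ₀ ∧ ν / μ₀ < 1 :=
  stmt12_general N ν μ₀ κ C b hν hνμ hC f hfsmall hflin u w wp wm humeas hwmeas hwpmeas hwmmeas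
    hw2int hdiff2int hwL2 hdiffL2 hub hshrink
end
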